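/- Asymptotics of the touchdown profile: let A > 0, q ∈ (0,1), κ > 0, θϰ > 0, and let g ∈ C²(0,1) be positive strictly decreasing with g(1⁻)=0 and g'(g⁻¹(w)) = -A·w^q(1+o(1)) as w → 0⁺. If x: [T,∞) → ℝ satisfies x(t) = o(e^{-θϰt}) as t → ∞, then v(t) = g⁻¹(κe^{-θϰt} + x(t)) satisfies v(t) = 1 − (κ^{1-q}/(A(1-q)))·e^{-θϰ(1-q)t} + o(e^{-θϰ(1-q)t}) as t → +∞. -/

import Mathlib

/-! Near `1⁻` the hypothesis on `g' ∘ g⁻¹` reads `g' u ~ -A g(u)^q`, so `(g^{1-q})' → -A(1-q)` and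
L'Hôpital gives `1 - u ~ g(u)^{1-q} / (A(1-q))`. Substituting `u = g⁻¹(w)` yields
`1 - g⁻¹(w) ~ w^{1-q} / (A(1-q))` as `w → 0⁺`, and along `w(t) = κe^{-θϰt} + x(t) ~ κe^{-θϰt}`
this becomes `1 - v(t) ~ κ^{1-q} e^{-θϰ(1-q)t} / (A(1-q))`. -/

open Real Set Filter Asymptotics

open Topology

section LHopital

variable {g : ℝ → ℝ} {b A q : ℝ}

theorem tendsto_rpow_one_sub_div_sub_of_tendsto_deriv (hA : A ≠ 0) (hq : q < 1)
    (hdiff : ∀ᶠ u in 𝓝[<] b, DifferentiableAt ℝ g u) (hpos : ∀ᶠ u in 𝓝[<] b, 0 < g u)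
    (hlim : Tendsto g (𝓝[<] b) (𝓝 0))
    (hderiv : Tendsto (fun u => deriv g u / (-(A * g u ^ q))) (𝓝[<] b) (𝓝 1)) :
    Tendsto (fun u => g u ^ (1 - q) / (u - b)) (𝓝[<] b) (𝓝 (-(A * (1 - q)))) := by
  have hq' : 0 < 1 - q := sub_pos.2 hq
  have hG : ∀ᶠ u in 𝓝[<] b, HasDerivAt (fun u => g u ^ (1 - q))
      (deriv g u * (1 - q) * g u ^ (1 - q - 1)) u := by
    filter_upwards [hdiff, hpos] with u hu hu'
    exact hu.hasDerivAt.rpow_const (Or.inl hu'.ne')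
  have hG_lim : Tendsto (fun u => g u ^ (1 - q)) (𝓝[<] b) (𝓝 0) := by
    simpa [Function.comp_def, zero_rpow hq'.ne'] using
      (continuousAt_rpow_const 0 _ (Or.inr hq'.le)).tendsto.comp hlim
  have hsub_lim : Tendsto (fun u => u - b) (𝓝[<] b) (𝓝 0) :=
    tendsto_sub_nhds_zero_iff.2 nhdsWithin_le_nhds
  have hratio : Tendsto (fun u => deriv g u * (1 - q) * g u ^ (1 - q - 1) / 1) (𝓝[<] b)
      (𝓝 (-(A * (1 - q)))) := by
    have := hderiv.const_mul (-(A * (1 - q)))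
    rw [mul_one] at this
    refine this.congr' ?_
    filter_upwards [hpos] with u hu
    rw [sub_sub_cancel_left, rpow_neg hu.le]
    field_simp
  exact HasDerivAt.lhopital_zero_nhdsLT hG
    (Eventually.of_forall fun u => (hasDerivAt_id u).sub_const b)
    (Eventually.of_forall fun _ => one_ne_zero) hG_lim hsub_lim hratio

theorem isEquivalent_sub_rpow_of_tendsto_deriv (hA : A ≠ 0) (hq : q < 1)
    (hdiff : ∀ᶠ u in 𝓝[<] b, DifferentiableAt ℝ g u) (hpos : ∀ᶠ u in 𝓝[<] b, 0 < g u)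
    (hlim : Tendsto g (𝓝[<] b) (𝓝 0))
    (hderiv : Tendsto (fun u => deriv g u / (-(A * g u ^ q))) (𝓝[<] b) (𝓝 1)) :
    (fun u => b - u) ~[𝓝[<] b] fun u => g u ^ (1 - q) / (A * (1 - q)) := by
  have hc : -(A * (1 - q)) ≠ 0 := neg_ne_zero.2 (mul_ne_zero hA (sub_pos.2 hq).ne')
  refine isEquivalent_of_tendsto_one ?_
  have := (tendsto_const_nhds (x := -(A * (1 - q)))).div
    (tendsto_rpow_one_sub_div_sub_of_tendsto_deriv hA hq hdiff hpos hlim hderiv) hc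
  rw [div_self hc] at this
  refine this.congr fun u => ?_
  simp only [Pi.div_apply]
  rw [div_div_eq_mul_div, div_div_eq_mul_div]
  ring

theorem isEquivalent_sub_inverse_rpow {ginv : ℝ → ℝ} (hA : A ≠ 0) (hq : q < 1)
    (hdiff : ∀ᶠ u in 𝓝[<] b, DifferentiableAt ℝ g u) (hpos : ∀ᶠ u in 𝓝[<] b, 0 < g u)
    (hlim : Tendsto g (𝓝[<] b) (𝓝 0)) (hleft_inv : ∀ᶠ u in 𝓝[<] b, ginv (g u) = u)
    (hright_inv : ∀ᶠ w in 𝓝[>] 0, g (ginv w) = w) (hginv : Tendsto ginv (𝓝[>] 0) (𝓝[<] b))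
    (hasymp : Tendsto (fun w => deriv g (ginv w) / (-(A * w ^ q))) (𝓝[>] 0) (𝓝 1)) :
    (fun w => b - ginv w) ~[𝓝[>] 0] fun w => w ^ (1 - q) / (A * (1 - q)) := by
  have hg : Tendsto g (𝓝[<] b) (𝓝[>] 0) := tendsto_nhdsWithin_iff.2 ⟨hlim, hpos⟩
  have hderiv : Tendsto (fun u => deriv g u / (-(A * g u ^ q))) (𝓝[<] b) (𝓝 1) := by
    refine (hasymp.comp hg).congr' ?_
    filter_upwards [hleft_inv] with u hu
    simp only [Function.comp, hu]
  refine ((isEquivalent_sub_rpow_of_tendsto_deriv hA hq hdiff hpos hlim hderiv).comp_tendsto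
    hginv).congr_right ?_
  filter_upwards [hright_inv] with w hw
  simp only [Function.comp, hw]

end LHopital

theorem isEquivalent_comp_const_mul_exp_add {f x : ℝ → ℝ} {c κ tk r : ℝ} (hκ : 0 < κ)
    (htk : 0 < tk) (hf : f ~[𝓝[>] 0] fun w => w ^ r / c)
    (hx : x =o[atTop] fun t => exp (-tk * t)) :
    (fun t => f (κ * exp (-tk * t) + x t)) ~[atTop] fun t => κ ^ r / c * exp (-(tk * r) * t) := by
  have hexp : Tendsto (fun t => κ * exp (-tk * t)) atTop (𝓝 0) := by
    simpa using
      (tendsto_exp_atBot.comp (tendsto_id.const_mul_atTop_of_neg (neg_lt_zero.2 htk))).const_mul κ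
  have hw : (fun t => κ * exp (-tk * t) + x t) ~[atTop] fun t => κ * exp (-tk * t) :=
    IsEquivalent.refl.add_isLittleO (hx.const_mul_right hκ.ne')
  have hw_tendsto : Tendsto (fun t => κ * exp (-tk * t) + x t) atTop (𝓝[>] 0) :=
    tendsto_nhdsWithin_iff.2 ⟨hw.symm.tendsto_nhds hexp,
      hw.eventually_pos (Eventually.of_forall fun t => by positivity)⟩
  refine ((hf.comp_tendsto hw_tendsto).trans
    ((hw.rpow fun t => by positivity).div IsEquivalent.refl)).congr_right
    (Eventually.of_forall fun t => ?_)
  simp only [Pi.div_apply, Pi.pow_apply]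
  rw [mul_rpow hκ.le (exp_pos _).le, ← exp_mul]
  ring_nf

theorem isLittleO_sub_of_isEquivalent_sub {α : Type*} {l : Filter α} {v E : α → ℝ} {b c : ℝ}
    (h : (fun t => b - v t) ~[l] fun t => c * E t) :
    (fun t => v t - (b - c * E t)) =o[l] E := by
  have := (h.isLittleO.trans_isBigO (isBigO_const_mul_self c E l)).neg_left
  refine this.congr_left fun t => ?_
  simp only [Pi.sub_apply]
  ring

/-- asymptotics of the touchdown profile. Let `A > 0`,
`q ∈ (0,1)`, `κ > 0`, `θϰ > 0` (denoted `tk`), and let `g ∈ C²(0,1)` be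
positive, strictly decreasing, `g(1⁻) = 0`, with inverse `ginv` near `1` and
`g'(g⁻¹(w)) = -A w^q (1+o(1))` as `w → 0⁺`. If `x(t) = o(e^{-θϰ t})` as
`t → ∞`, then `v(t) = g⁻¹(κ e^{-θϰ t} + x(t))` satisfies
`v(t) = 1 - (κ^{1-q}/(A(1-q))) e^{-θϰ(1-q)t} + o(e^{-θϰ(1-q)t})`. -/
theorem stmt19 (g ginv : ℝ → ℝ) (A q κ tk : ℝ)
    (hA : 0 < A) (hq : q ∈ Set.Ioo (0:ℝ) 1) (hκ : 0 < κ) (htk : 0 < tk)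
    (hC2 : ContDiffOn ℝ 2 g (Set.Ioo 0 1))
    (hpos : ∀ u ∈ Set.Ioo (0:ℝ) 1, 0 < g u)
    (hanti : StrictAntiOn g (Set.Ioo 0 1))
    (hlim : Filter.Tendsto g (nhdsWithin 1 (Set.Iio 1)) (nhds 0))
    (hginv : ∀ᶠ w in nhdsWithin 0 (Set.Ioi 0),
      ginv w ∈ Set.Ioo (0:ℝ) 1 ∧ g (ginv w) = w)
    (hginvlim : Filter.Tendsto ginv (nhdsWithin 0 (Set.Ioi 0))
      (nhdsWithin 1 (Set.Iio 1)))
    (hasymp : Filter.Tendsto (fun w => deriv g (ginv w) / (-(A * w ^ q)))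
      (nhdsWithin 0 (Set.Ioi 0)) (nhds 1))
    (x : ℝ → ℝ)
    (hx : (fun t => x t) =o[Filter.atTop] fun t => Real.exp (-tk * t)) :
    (fun t => ginv (κ * Real.exp (-tk * t) + x t) -
        (1 - κ ^ (1 - q) / (A * (1 - q)) * Real.exp (-(tk * (1 - q)) * t)))
      =o[Filter.atTop] fun t => Real.exp (-(tk * (1 - q)) * t) := by
  have hIoo : ∀ᶠ u in 𝓝[<] (1:ℝ), u ∈ Ioo (0:ℝ) 1 := Ioo_mem_nhdsLT (by norm_num)
  have hdiff : ∀ᶠ u in 𝓝[<] (1:ℝ), DifferentiableAt ℝ g u := by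
    filter_upwards [hIoo] with u hu
    exact (hC2.differentiableOn two_ne_zero).differentiableAt (isOpen_Ioo.mem_nhds hu)
  have hleft_inv : ∀ᶠ u in 𝓝[<] (1:ℝ), ginv (g u) = u := by
    have hg : Tendsto g (𝓝[<] 1) (𝓝[>] 0) := tendsto_nhdsWithin_iff.2 ⟨hlim, hIoo.mono hpos⟩
    filter_upwards [hg.eventually hginv, hIoo] with u hu hu'
    exact hanti.injOn hu.1 hu' hu.2
  have hprofile := isEquivalent_sub_inverse_rpow hA.ne' hq.2 hdiff (hIoo.mono hpos) hlim
    hleft_inv (hginv.mono fun _ hw => hw.2) hginvlim hasymp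
  exact isLittleO_sub_of_isEquivalent_sub
    (isEquivalent_comp_const_mul_exp_add hκ htk hprofile hx)
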